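/- Let x be a random variable taking values in a finite set X with probability mass function p_d, and let V be a finite set. Suppose the encoder q(z | x) (a conditional probability mass function on V^K given x) and decoder {p_i}_{i=1}^K (conditional probability mass functions p_i(x | z_{≤i}) on X) jointly minimize L(q, {p_i}) = (1/K) Σ_{i=1}^K E_{x ~ p_d, z ~ q(·|x)}[−log p_i(x | z_{≤i})] over all encoder/decoder pairs, and that under the induced joint law, z_{i−1} and z_i are conditionally independent given (x, z_{≤i−2}) for every i ∈ {3, …, K}. Then the sequence a_i = I(x; z_{≤i}) has non-increasing increments: a_i − a_{i−1} ≤ a_{i−1} − a_{i−2} for every i ∈ {3, …, K}. -/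

import Mathlib

open Finset

/-- A probability mass function on a finite type. -/
def IsPMF {Ω : Type*} [Fintype Ω] (μ : Ω → ℝ) : Prop :=
  (∀ ω, 0 ≤ μ ω) ∧ ∑ ω, μ ω = 1

/-- The probability that the random variable `f` takes the value `a`. -/
def pr {Ω A : Type*} [Fintype Ω] [DecidableEq A] (μ : Ω → ℝ) (f : Ω → A) (a : A) : ℝ :=
  ∑ ω, if f ω = a then μ ω else 0

/-- Mutual information `I(f; g)`; terms with zero joint probability contribute `0`. -/
noncomputable def mi {Ω A B : Type*} [Fintype Ω] [Fintype A] [Fintype B]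
    [DecidableEq A] [DecidableEq B] (μ : Ω → ℝ) (f : Ω → A) (g : Ω → B) : ℝ :=
  ∑ a : A, ∑ b : B,
    pr μ (fun ω => (f ω, g ω)) (a, b) *
      Real.log (pr μ (fun ω => (f ω, g ω)) (a, b) / (pr μ f a * pr μ g b))

/-- Conditional mutual information `I(f; g | h)`. -/
noncomputable def cmi {Ω A B C : Type*} [Fintype Ω] [Fintype A] [Fintype B] [Fintype C]
    [DecidableEq A] [DecidableEq B] [DecidableEq C]
    (μ : Ω → ℝ) (f : Ω → A) (g : Ω → B) (h : Ω → C) : ℝ :=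
  ∑ c : C, ∑ a : A, ∑ b : B,
    pr μ (fun ω => ((f ω, g ω), h ω)) ((a, b), c) *
      Real.log (pr μ (fun ω => ((f ω, g ω), h ω)) ((a, b), c) * pr μ h c /
        (pr μ (fun ω => (f ω, h ω)) (a, c) * pr μ (fun ω => (g ω, h ω)) (b, c)))

/-- `f` and `g` are conditionally independent given `h`. -/
def CondIndepRV {Ω A B C : Type*} [Fintype Ω] [DecidableEq A] [DecidableEq B] [DecidableEq C]
    (μ : Ω → ℝ) (f : Ω → A) (g : Ω → B) (h : Ω → C) : Prop :=
  ∀ a b c, 0 < pr μ h c →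
    pr μ (fun ω => ((f ω, g ω), h ω)) ((a, b), c) * pr μ h c =
      pr μ (fun ω => (f ω, h ω)) (a, c) * pr μ (fun ω => (g ω, h ω)) (b, c)

/-- Entropy `H(f)`. -/
noncomputable def ent {Ω A : Type*} [Fintype Ω] [Fintype A] [DecidableEq A]
    (μ : Ω → ℝ) (f : Ω → A) : ℝ :=
  -∑ a : A, pr μ f a * Real.log (pr μ f a)

/-- Conditional entropy `H(f | g)`. -/
noncomputable def condEnt {Ω A B : Type*} [Fintype Ω] [Fintype A] [Fintype B]
    [DecidableEq A] [DecidableEq B] (μ : Ω → ℝ) (f : Ω → A) (g : Ω → B) : ℝ :=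
  -∑ a : A, ∑ b : B,
    pr μ (fun ω => (f ω, g ω)) (a, b) *
      Real.log (pr μ (fun ω => (f ω, g ω)) (a, b) / pr μ g b)

/-- The joint pmf of `(x, z)` induced by the data pmf `pd` and the encoder `q`. -/
def joint {X Z : Type*} (pd : X → ℝ) (q : X → Z → ℝ) : X × Z → ℝ :=
  fun ω => pd ω.1 * q ω.1 ω.2

/-- The first `i` coordinates `z_{≤ i}` of a vector `z ∈ V^K`. -/
def trunc {V : Type*} {K : ℕ} (i : ℕ) (h : i ≤ K) (v : Fin K → V) : Fin i → V :=
  fun j => v (Fin.castLE h j)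

/-- `- log x` valued in the extended reals, with `- log 0 = ⊤`. -/
noncomputable def negLog (x : ℝ) : EReal := if x = 0 then ⊤ else ((-Real.log x : ℝ) : EReal)

/-- An encoder is a conditional pmf `q(z | x)`. -/
def IsEncoder {X Z : Type*} [Fintype Z] (q : X → Z → ℝ) : Prop :=
  ∀ a, (∀ v, 0 ≤ q a v) ∧ ∑ v, q a v = 1

/-- A decoder is a family of conditional pmfs `p_i(x | z_{≤ i})`, `i = 1, …, K`. -/
def IsDecoder {X V : Type*} [Fintype X] (K : ℕ) (d : (i : ℕ) → (Fin i → V) → X → ℝ) : Prop :=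
  ∀ i, 1 ≤ i → i ≤ K → ∀ zc : Fin i → V, (∀ a, 0 ≤ d i zc a) ∧ ∑ a, d i zc a = 1

/-- The objective `L(q, {p_i}) = (1/K) ∑_{i=1}^K E[- log p_i(x | z_{≤ i})]`. -/
noncomputable def objL {X V : Type*} [Fintype X] [Fintype V] (K : ℕ)
    (pd : X → ℝ) (q : X → (Fin K → V) → ℝ) (d : (i : ℕ) → (Fin i → V) → X → ℝ) : EReal :=
  ((1 / K : ℝ) : EReal) *
    ∑ i : Fin K, ∑ a : X, ∑ v : Fin K → V,
      ((pd a * q a v : ℝ) : EReal) * negLog (d (i.1 + 1) (trunc (i.1 + 1) i.isLt v) a)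

/-!
For a fixed encoder the best decoder is the posterior of `x`: by Gibbs' inequality the optimal
value of the objective is `(1/K) ∑ᵢ H(x | z_{≤ i}) = H(x) - (1/K) ∑ᵢ I(x; z_{≤ i})`, so an optimal
encoder maximizes `∑ᵢ I(x; z_{≤ i})`. Swapping the coordinates `z_{i-1}` and `z_i` of the encoder
changes only the term `I(x; z_{≤ i-1})`, into `I(x; z_i, z_{≤ i-2})`; hence optimality gives
`I(x; z_i, z_{≤ i-2}) ≤ a_{i-1}`. By the chain rule the increment `a_i - a_{i-1}` is
`I(x; z_i | z_{≤ i-1})`, and conditional independence of `z_{i-1}` and `z_i` given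
`(x, z_{≤ i-2})` bounds it by `I(x; z_i | z_{≤ i-2}) = I(x; z_i, z_{≤ i-2}) - a_{i-2}`.
-/

open Real

lemma sum_mul_log_div_nonneg {ι : Type*} [Fintype ι] {p s : ι → ℝ} (hp : ∀ i, 0 ≤ p i)
    (hs : ∀ i, 0 ≤ s i) (hps : ∀ i, p i ≠ 0 → s i ≠ 0) (hsum : ∑ i, s i ≤ ∑ i, p i) :
    0 ≤ ∑ i, p i * log (p i / s i) := by
  have key : ∀ i, p i - s i ≤ p i * log (p i / s i) := fun i => by
    rcases (hp i).eq_or_lt with hpi | hpi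
    · simp [← hpi, hs i]
    · have hsi := (hs i).lt_of_ne' (hps i hpi.ne')
      have := one_sub_inv_le_log_of_pos (div_pos hpi hsi)
      calc p i - s i = p i * (1 - (p i / s i)⁻¹) := by field_simp
        _ ≤ p i * log (p i / s i) := by gcongr
  calc (0 : ℝ) ≤ ∑ i, (p i - s i) := by rw [sum_sub_distrib]; linarith
    _ ≤ _ := sum_le_sum fun i _ => key i

lemma EReal.coe_finset_sum {ι : Type*} (s : Finset ι) (f : ι → ℝ) :
    ((∑ i ∈ s, f i : ℝ) : EReal) = ∑ i ∈ s, (f i : EReal) :=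
  map_sum (⟨⟨Real.toEReal, EReal.coe_zero⟩, EReal.coe_add⟩ : ℝ →+ EReal) f s

lemma negLog_nonneg {x : ℝ} (h₀ : 0 ≤ x) (h₁ : x ≤ 1) : 0 ≤ negLog x := by
  unfold negLog
  split_ifs
  · exact le_top
  · exact EReal.coe_nonneg.mpr (neg_nonneg.mpr (log_nonpos h₀ h₁))

section FiniteProbability

variable {Ω A B C D : Type*} [Fintype Ω] [DecidableEq A] [DecidableEq B] [DecidableEq C]
  [DecidableEq D] {μ : Ω → ℝ}

lemma pr_nonneg (hμ : ∀ ω, 0 ≤ μ ω) (f : Ω → A) (a : A) : 0 ≤ pr μ f a :=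
  sum_nonneg fun ω _ => by split_ifs <;> simp [hμ ω]

lemma pr_congr {f : Ω → A} {g : Ω → B} {a : A} {b : B} (h : ∀ ω, f ω = a ↔ g ω = b) :
    pr μ f a = pr μ g b :=
  sum_congr rfl fun ω _ => by simp only [h]

lemma pr_le_pr (hμ : ∀ ω, 0 ≤ μ ω) {f : Ω → A} {g : Ω → B} {a : A} {b : B}
    (h : ∀ ω, f ω = a → g ω = b) : pr μ f a ≤ pr μ g b :=
  sum_le_sum fun ω _ => by
    by_cases hf : f ω = a
    · simp [hf, h ω hf]
    · split_ifs <;> simp [hμ ω]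

lemma pr_pos_of_pr_pos (hμ : ∀ ω, 0 ≤ μ ω) {f : Ω → A} {g : Ω → B} {a : A} {b : B}
    (h : ∀ ω, f ω = a → g ω = b) (ha : 0 < pr μ f a) : 0 < pr μ g b :=
  ha.trans_le (pr_le_pr hμ h)

lemma pr_apply_pos (hμ : ∀ ω, 0 ≤ μ ω) (f : Ω → A) {ω : Ω} (hω : μ ω ≠ 0) :
    0 < pr μ f (f ω) :=
  ((hμ ω).lt_of_ne' hω).trans_le <| by
    simpa [pr] using single_le_sum (f := fun ω' => if f ω' = f ω then μ ω' else 0)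
      (fun ω' _ => by split_ifs <;> simp [hμ ω']) (mem_univ ω)

lemma exists_ne_zero_of_pr_ne_zero {f : Ω → A} {a : A} (h : pr μ f a ≠ 0) :
    ∃ ω, μ ω ≠ 0 ∧ f ω = a := by
  contrapose! h
  exact sum_eq_zero fun ω _ => by by_cases hω : μ ω = 0 <;> simp_all

lemma sum_pr_mul [Fintype A] (f : Ω → A) (F : A → ℝ) :
    ∑ a, pr μ f a * F a = ∑ ω, μ ω * F (f ω) := by
  simp only [pr, sum_mul, ite_mul, zero_mul]
  rw [sum_comm]
  exact sum_congr rfl fun ω _ => by simp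

lemma sum_pr [Fintype A] (f : Ω → A) : ∑ a, pr μ f a = ∑ ω, μ ω := by
  simpa using sum_pr_mul (μ := μ) f 1

lemma sum_pr_fst [Fintype A] (f : Ω → A) (g : Ω → B) (b : B) :
    ∑ a, pr μ (fun ω => (f ω, g ω)) (a, b) = pr μ g b := by
  simp only [pr, Prod.mk.injEq]
  rw [sum_comm]
  exact sum_congr rfl fun ω _ => by by_cases hg : g ω = b <;> simp [hg]

lemma pr_comp_equiv {Ω' : Type*} [Fintype Ω'] (e : Ω' ≃ Ω) (F : Ω → A) (a : A) :
    pr (fun ω => μ (e ω)) (fun ω => F (e ω)) a = pr μ F a :=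
  e.sum_comp fun ω => if F ω = a then μ ω else 0

lemma sum_mul_congr_of_ne_zero {F G : Ω → ℝ} (h : ∀ ω, μ ω ≠ 0 → F ω = G ω) :
    ∑ ω, μ ω * F ω = ∑ ω, μ ω * G ω :=
  sum_congr rfl fun ω _ => by by_cases hω : μ ω = 0 <;> simp [hω, h]

noncomputable def logPr (μ : Ω → ℝ) (f : Ω → A) (ω : Ω) : ℝ := log (pr μ f (f ω))

lemma logPr_congr {f : Ω → A} {g : Ω → B} {ω : Ω} (h : ∀ ω', f ω' = f ω ↔ g ω' = g ω) :
    logPr μ f ω = logPr μ g ω := by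
  rw [logPr, logPr, pr_congr h]

lemma logPr_pair_congr_right {f : Ω → A} {g : Ω → B} {g' : Ω → C} {ω : Ω}
    (h : ∀ ω', g ω' = g ω ↔ g' ω' = g' ω) :
    logPr μ (fun ω => (f ω, g ω)) ω = logPr μ (fun ω => (f ω, g' ω)) ω :=
  logPr_congr fun ω' => by simp only [Prod.mk.injEq, h ω']

noncomputable def condPr [Fintype A] (μ : Ω → ℝ) (f : Ω → A) (g : Ω → B) (b : B) (a : A) : ℝ :=
  if pr μ g b = 0 then (Fintype.card A : ℝ)⁻¹ else pr μ (fun ω => (f ω, g ω)) (a, b) / pr μ g b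

lemma condPr_nonneg [Fintype A] (hμ : ∀ ω, 0 ≤ μ ω) (f : Ω → A) (g : Ω → B) (b : B) (a : A) :
    0 ≤ condPr μ f g b a := by
  unfold condPr
  split_ifs
  · positivity
  · exact div_nonneg (pr_nonneg hμ _ _) (pr_nonneg hμ _ _)

lemma sum_condPr [Fintype A] [Nonempty A] (f : Ω → A) (g : Ω → B) (b : B) :
    ∑ a, condPr μ f g b a = 1 := by
  unfold condPr
  split_ifs with hb
  · simp
  · rw [← sum_div, sum_pr_fst, div_self hb]

section Information

variable [Fintype A] [Fintype B] [Fintype C]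

lemma ent_eq_sum_logPr (f : Ω → A) : ent μ f = -∑ ω, μ ω * logPr μ f ω := by
  rw [ent, sum_pr_mul f fun a => log (pr μ f a)]
  rfl

lemma condEnt_eq_sum_log (f : Ω → A) (g : Ω → B) :
    condEnt μ f g = -∑ ω, μ ω *
      log (pr μ (fun ω => (f ω, g ω)) (f ω, g ω) / pr μ g (g ω)) :=
  congrArg Neg.neg <| (Fintype.sum_prod_type _).symm.trans <|
    sum_pr_mul (fun ω => (f ω, g ω)) fun x => log (pr μ (fun ω => (f ω, g ω)) x / pr μ g x.2)

lemma condEnt_eq_sum_logPr (hμ : ∀ ω, 0 ≤ μ ω) (f : Ω → A) (g : Ω → B) :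
    condEnt μ f g = -∑ ω, μ ω * (logPr μ (fun ω => (f ω, g ω)) ω - logPr μ g ω) := by
  rw [condEnt_eq_sum_log]
  congr 1
  refine sum_mul_congr_of_ne_zero fun ω hω => ?_
  rw [logPr, logPr, log_div (pr_apply_pos hμ _ hω).ne' (pr_apply_pos hμ _ hω).ne']

lemma mi_eq_sum_log (f : Ω → A) (g : Ω → B) :
    mi μ f g = ∑ ω, μ ω *
      log (pr μ (fun ω => (f ω, g ω)) (f ω, g ω) / (pr μ f (f ω) * pr μ g (g ω))) :=
  (Fintype.sum_prod_type _).symm.trans <| sum_pr_mul (fun ω => (f ω, g ω)) fun x =>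
    log (pr μ (fun ω => (f ω, g ω)) x / (pr μ f x.1 * pr μ g x.2))

lemma mi_eq_sum_logPr (hμ : ∀ ω, 0 ≤ μ ω) (f : Ω → A) (g : Ω → B) :
    mi μ f g = ∑ ω, μ ω *
      (logPr μ (fun ω => (f ω, g ω)) ω - logPr μ f ω - logPr μ g ω) := by
  rw [mi_eq_sum_log]
  refine sum_mul_congr_of_ne_zero fun ω hω => ?_
  have hf := pr_apply_pos hμ f hω
  have hg := pr_apply_pos hμ g hω
  rw [logPr, logPr, logPr, log_div (pr_apply_pos hμ _ hω).ne' (by positivity),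
    log_mul hf.ne' hg.ne', sub_sub]

lemma cmi_eq_sum_prod (f : Ω → A) (g : Ω → B) (h : Ω → C) :
    cmi μ f g h = ∑ x : (A × B) × C, pr μ (fun ω => ((f ω, g ω), h ω)) x *
      log (pr μ (fun ω => ((f ω, g ω), h ω)) x * pr μ h x.2 /
        (pr μ (fun ω => (f ω, h ω)) (x.1.1, x.2) * pr μ (fun ω => (g ω, h ω)) (x.1.2, x.2))) := by
  symm
  rw [Fintype.sum_prod_type, sum_comm]
  exact sum_congr rfl fun c _ => Fintype.sum_prod_type _

lemma cmi_eq_sum_logPr (hμ : ∀ ω, 0 ≤ μ ω) (f : Ω → A) (g : Ω → B) (h : Ω → C) :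
    cmi μ f g h = ∑ ω, μ ω * (logPr μ (fun ω => ((f ω, g ω), h ω)) ω + logPr μ h ω -
      logPr μ (fun ω => (f ω, h ω)) ω - logPr μ (fun ω => (g ω, h ω)) ω) := by
  rw [cmi_eq_sum_prod, sum_pr_mul]
  refine sum_mul_congr_of_ne_zero fun ω hω => ?_
  have hfgh := pr_apply_pos hμ (fun ω => ((f ω, g ω), h ω)) hω
  have hh := pr_apply_pos hμ h hω
  have hfh := pr_apply_pos hμ (fun ω => (f ω, h ω)) hω
  have hgh := pr_apply_pos hμ (fun ω => (g ω, h ω)) hω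
  dsimp only
  rw [logPr, logPr, logPr, logPr, log_div (by positivity) (by positivity),
    log_mul hfgh.ne' hh.ne', log_mul hfh.ne' hgh.ne']
  ring

lemma mi_eq_ent_sub_condEnt (hμ : ∀ ω, 0 ≤ μ ω) (f : Ω → A) (g : Ω → B) :
    mi μ f g = ent μ f - condEnt μ f g := by
  rw [mi_eq_sum_logPr hμ, ent_eq_sum_logPr, condEnt_eq_sum_logPr hμ, neg_sub_neg,
    ← sum_sub_distrib]
  exact sum_congr rfl fun ω _ => by ring

lemma mi_pair_eq_mi_add_cmi (hμ : ∀ ω, 0 ≤ μ ω) (f : Ω → A) (g : Ω → B) (h : Ω → C) :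
    mi μ f (fun ω => (g ω, h ω)) = mi μ f h + cmi μ f g h := by
  rw [mi_eq_sum_logPr hμ, mi_eq_sum_logPr hμ, cmi_eq_sum_logPr hμ, ← sum_add_distrib]
  refine sum_congr rfl fun ω _ => ?_
  have : logPr μ (fun ω => (f ω, g ω, h ω)) ω = logPr μ (fun ω => ((f ω, g ω), h ω)) ω :=
    logPr_congr fun _ => by simp only [Prod.mk.injEq, and_assoc]
  rw [this]
  ring

lemma cmi_exchange [Fintype D] (hμ : ∀ ω, 0 ≤ μ ω) (f : Ω → A) (g : Ω → B) (e : Ω → C)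
    (h : Ω → D) :
    cmi μ f e (fun ω => (g ω, h ω)) + cmi μ g e h =
      cmi μ g e (fun ω => (f ω, h ω)) + cmi μ f e h := by
  simp only [cmi_eq_sum_logPr hμ, ← sum_add_distrib]
  refine sum_congr rfl fun ω _ => ?_
  have h₁ : logPr μ (fun ω => ((g ω, e ω), f ω, h ω)) ω =
      logPr μ (fun ω => ((f ω, e ω), g ω, h ω)) ω :=
    logPr_congr fun _ => by simp only [Prod.mk.injEq]; tauto
  have h₂ : logPr μ (fun ω => (g ω, f ω, h ω)) ω = logPr μ (fun ω => (f ω, g ω, h ω)) ω :=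
    logPr_congr fun _ => by simp only [Prod.mk.injEq]; tauto
  have h₃ : logPr μ (fun ω => ((g ω, e ω), h ω)) ω = logPr μ (fun ω => (e ω, g ω, h ω)) ω :=
    logPr_congr fun _ => by simp only [Prod.mk.injEq]; tauto
  have h₄ : logPr μ (fun ω => ((f ω, e ω), h ω)) ω = logPr μ (fun ω => (e ω, f ω, h ω)) ω :=
    logPr_congr fun _ => by simp only [Prod.mk.injEq]; tauto
  rw [h₁, h₂, h₃, h₄]
  ring

lemma mi_congr_right (hμ : ∀ ω, 0 ≤ μ ω) (f : Ω → A) {g : Ω → B} {g' : Ω → C}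
    (h : ∀ ω ω', g ω' = g ω ↔ g' ω' = g' ω) : mi μ f g = mi μ f g' := by
  simp only [mi_eq_sum_logPr hμ, logPr_congr (h _), logPr_pair_congr_right (h _)]

lemma cmi_congr_right [Fintype D] (hμ : ∀ ω, 0 ≤ μ ω) (f : Ω → A) (g : Ω → B) {h : Ω → C}
    {h' : Ω → D} (hh : ∀ ω ω', h ω' = h ω ↔ h' ω' = h' ω) : cmi μ f g h = cmi μ f g h' := by
  simp only [cmi_eq_sum_logPr hμ, logPr_congr (hh _), logPr_pair_congr_right (hh _)]

lemma mi_comp_equiv {Ω' : Type*} [Fintype Ω'] (e : Ω' ≃ Ω) (f : Ω → A) (g : Ω → B) :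
    mi (fun ω => μ (e ω)) (fun ω => f (e ω)) (fun ω => g (e ω)) = mi μ f g := by
  simp only [mi, pr_comp_equiv e (fun ω => (f ω, g ω)), pr_comp_equiv e f, pr_comp_equiv e g]

lemma cmi_nonneg (hμ : ∀ ω, 0 ≤ μ ω) (f : Ω → A) (g : Ω → B) (h : Ω → C) :
    0 ≤ cmi μ f g h := by
  have hsum : ∑ x : (A × B) × C, pr μ (fun ω => (f ω, h ω)) (x.1.1, x.2) *
      pr μ (fun ω => (g ω, h ω)) (x.1.2, x.2) / pr μ h x.2 = ∑ c, pr μ h c := by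
    rw [Fintype.sum_prod_type, sum_comm]
    refine sum_congr rfl fun c _ => ?_
    rw [Fintype.sum_prod_type]
    simp_rw [← sum_div, ← mul_sum, ← sum_mul, sum_pr_fst]
    exact mul_self_div_self _
  have hsupp : ∀ x : (A × B) × C, pr μ (fun ω => ((f ω, g ω), h ω)) x ≠ 0 →
      pr μ (fun ω => (f ω, h ω)) (x.1.1, x.2) * pr μ (fun ω => (g ω, h ω)) (x.1.2, x.2) /
        pr μ h x.2 ≠ 0 := by
    rintro ⟨⟨a, b⟩, c⟩ hx
    have hx := (pr_nonneg hμ _ _).lt_of_ne' hx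
    have hfh : 0 < pr μ (fun ω => (f ω, h ω)) (a, c) :=
      pr_pos_of_pr_pos hμ (fun ω hω => by simp_all [Prod.ext_iff]) hx
    have hgh : 0 < pr μ (fun ω => (g ω, h ω)) (b, c) :=
      pr_pos_of_pr_pos hμ (fun ω hω => by simp_all [Prod.ext_iff]) hx
    have hh : 0 < pr μ h c := pr_pos_of_pr_pos hμ (fun ω hω => by simp_all [Prod.ext_iff]) hx
    positivity
  have hgibbs := sum_mul_log_div_nonneg (fun x => pr_nonneg hμ _ x)
    (fun x => div_nonneg (mul_nonneg (pr_nonneg hμ _ _) (pr_nonneg hμ _ _)) (pr_nonneg hμ _ _))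
    hsupp (by rw [hsum, sum_pr, sum_pr])
  rw [cmi_eq_sum_prod]
  simpa only [div_div_eq_mul_div] using hgibbs

lemma cmi_eq_zero_of_condIndepRV (hμ : ∀ ω, 0 ≤ μ ω) {f : Ω → A} {g : Ω → B} {h : Ω → C}
    (hind : CondIndepRV μ f g h) : cmi μ f g h = 0 := by
  rw [cmi_eq_sum_prod]
  refine sum_eq_zero fun ⟨⟨a, b⟩, c⟩ _ => ?_
  rcases (pr_nonneg hμ (fun ω => ((f ω, g ω), h ω)) ((a, b), c)).eq_or_lt with hx | hx
  · simp [← hx]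
  · have hh : 0 < pr μ h c := pr_pos_of_pr_pos hμ (fun ω hω => by simp_all [Prod.ext_iff]) hx
    rw [hind a b c hh, div_self (by rw [← hind a b c hh]; positivity), log_one, mul_zero]

lemma condEnt_le_sum_mul_neg_log (hμ : ∀ ω, 0 ≤ μ ω) (f : Ω → A) (g : Ω → B)
    {r : B → A → ℝ} (hr₀ : ∀ b a, 0 ≤ r b a) (hr₁ : ∀ b, ∑ a, r b a = 1)
    (hsupp : ∀ ω, μ ω ≠ 0 → r (g ω) (f ω) ≠ 0) :
    condEnt μ f g ≤ ∑ ω, μ ω * -log (r (g ω) (f ω)) := by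
  have hgibbs := sum_mul_log_div_nonneg (p := pr μ (fun ω => (f ω, g ω)))
    (s := fun x => pr μ g x.2 * r x.2 x.1) (fun x => pr_nonneg hμ _ x)
    (fun x => mul_nonneg (pr_nonneg hμ _ _) (hr₀ _ _)) ?_ ?_
  · rw [sum_pr_mul] at hgibbs
    rw [condEnt_eq_sum_log, ← sub_nonneg, sub_neg_eq_add, ← sum_add_distrib]
    simp only [← mul_add]
    refine hgibbs.trans_eq (sum_mul_congr_of_ne_zero fun ω hω => ?_)
    have hfg := pr_apply_pos hμ (fun ω => (f ω, g ω)) hω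
    have hg := pr_apply_pos hμ g hω
    have hr := (hr₀ (g ω) (f ω)).lt_of_ne' (hsupp ω hω)
    dsimp only
    rw [log_div hfg.ne' (by positivity), log_div hfg.ne' hg.ne', log_mul hg.ne' hr.ne']
    ring
  · intro x hx
    obtain ⟨ω, hω, rfl⟩ := exists_ne_zero_of_pr_ne_zero hx
    exact mul_ne_zero (pr_apply_pos hμ g hω).ne' (hsupp ω hω)
  · refine le_of_eq ?_
    calc ∑ x : A × B, pr μ g x.2 * r x.2 x.1 = ∑ b, pr μ g b := by
          rw [Fintype.sum_prod_type, sum_comm]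
          exact sum_congr rfl fun b _ => by dsimp only; rw [← mul_sum, hr₁, mul_one]
      _ = ∑ x, pr μ (fun ω => (f ω, g ω)) x := by rw [sum_pr, sum_pr]

lemma cmi_le_of_condIndepRV [Fintype D] (hμ : ∀ ω, 0 ≤ μ ω) {f : Ω → A} {g : Ω → B}
    {e : Ω → C} {h : Ω → D} (hind : CondIndepRV μ g e fun ω => (f ω, h ω)) :
    cmi μ f e (fun ω => (g ω, h ω)) ≤ cmi μ f e h := by
  have hexch := cmi_exchange hμ f g e h
  rw [cmi_eq_zero_of_condIndepRV hμ hind] at hexch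
  linarith [cmi_nonneg hμ g e h]

lemma coe_condEnt_le_sum_mul_negLog (hμ : ∀ ω, 0 ≤ μ ω) (f : Ω → A) (g : Ω → B)
    {r : B → A → ℝ} (hr₀ : ∀ b a, 0 ≤ r b a) (hr₁ : ∀ b, ∑ a, r b a = 1) :
    (condEnt μ f g : EReal) ≤ ∑ ω, (μ ω : EReal) * negLog (r (g ω) (f ω)) := by
  by_cases hsupp : ∀ ω, μ ω ≠ 0 → r (g ω) (f ω) ≠ 0
  · have hterm : ∀ ω, (μ ω : EReal) * negLog (r (g ω) (f ω)) =
        ((μ ω * -log (r (g ω) (f ω)) : ℝ) : EReal) := fun ω => by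
      by_cases hω : μ ω = 0
      · simp [hω]
      · rw [negLog, if_neg (hsupp ω hω), EReal.coe_mul]
    simp only [hterm, ← EReal.coe_finset_sum, EReal.coe_le_coe_iff]
    exact condEnt_le_sum_mul_neg_log hμ f g hr₀ hr₁ hsupp
  · obtain ⟨ω₀, hω₀, hr⟩ : ∃ ω, μ ω ≠ 0 ∧ r (g ω) (f ω) = 0 := by simpa using hsupp
    have hnonneg : ∀ ω, 0 ≤ (μ ω : EReal) * negLog (r (g ω) (f ω)) := fun ω =>
      mul_nonneg (EReal.coe_nonneg.mpr (hμ ω)) (negLog_nonneg (hr₀ _ _) <| by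
        simpa [hr₁] using single_le_sum (fun a _ => hr₀ (g ω) a) (mem_univ (f ω)))
    calc (condEnt μ f g : EReal) ≤ (μ ω₀ : EReal) * negLog (r (g ω₀) (f ω₀)) := by
          rw [hr, negLog, if_pos rfl, EReal.coe_mul_top_of_pos ((hμ ω₀).lt_of_ne' hω₀)]
          exact le_top
      _ ≤ _ := single_le_sum (fun ω _ => hnonneg ω) (mem_univ ω₀)

lemma sum_mul_negLog_condPr (hμ : ∀ ω, 0 ≤ μ ω) (f : Ω → A) (g : Ω → B) :
    ∑ ω, (μ ω : EReal) * negLog (condPr μ f g (g ω) (f ω)) = condEnt μ f g := by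
  rw [condEnt_eq_sum_log, ← sum_neg_distrib, EReal.coe_finset_sum]
  refine sum_congr rfl fun ω _ => ?_
  by_cases hω : μ ω = 0
  · simp [hω]
  · have hfg := pr_apply_pos hμ (fun ω => (f ω, g ω)) hω
    have hg := pr_apply_pos hμ g hω
    rw [condPr, if_neg hg.ne', negLog, if_neg (by positivity), ← EReal.coe_mul, mul_neg]

end Information

end FiniteProbability

lemma IsPMF.nonempty {Ω : Type*} [Fintype Ω] {μ : Ω → ℝ} (hμ : IsPMF μ) : Nonempty Ω := by
  by_contra h
  simpa [not_nonempty_iff.mp h] using hμ.2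

section Autoencoder

variable {X V : Type*} [Fintype X] [Fintype V] {K : ℕ} {pd : X → ℝ}

lemma joint_nonneg {Z : Type*} [Fintype Z] {q : X → Z → ℝ} (hpd : IsPMF pd) (hq : IsEncoder q)
    (ω : X × Z) : 0 ≤ joint pd q ω :=
  mul_nonneg (hpd.1 _) ((hq _).1 _)

def IsOptimalPair (K : ℕ) (pd : X → ℝ) (q : X → (Fin K → V) → ℝ)
    (d : (i : ℕ) → (Fin i → V) → X → ℝ) : Prop :=
  ∀ q' : X → (Fin K → V) → ℝ, IsEncoder q' → ∀ d' : (i : ℕ) → (Fin i → V) → X → ℝ,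
    IsDecoder K d' → objL K pd q d ≤ objL K pd q' d'

variable [DecidableEq X]

lemma pr_joint_fst {Z : Type*} [Fintype Z] {q : X → Z → ℝ} (hq : IsEncoder q) (a : X) :
    pr (joint pd q) Prod.fst a = pd a := by
  simp only [pr, joint, Fintype.sum_prod_type]
  simp [← mul_sum, (hq a).2]

lemma ent_joint_fst {Z : Type*} [Fintype Z] {q : X → Z → ℝ} (hq : IsEncoder q) :
    ent (joint pd q) Prod.fst = -∑ a, pd a * log (pd a) := by
  simp only [ent, pr_joint_fst hq]

variable [DecidableEq V] {q : X → (Fin K → V) → ℝ}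

noncomputable def posteriorDecoder (pd : X → ℝ) (q : X → (Fin K → V) → ℝ) (i : ℕ)
    (zc : Fin i → V) (a : X) : ℝ :=
  if h : i ≤ K then condPr (joint pd q) Prod.fst (fun ω => trunc i h ω.2) zc a else 0

lemma isDecoder_posteriorDecoder (hpd : IsPMF pd) (hq : IsEncoder q) :
    IsDecoder K (posteriorDecoder pd q) := by
  have := hpd.nonempty
  intro i _ hi zc
  simp only [posteriorDecoder, dif_pos hi]
  exact ⟨condPr_nonneg (joint_nonneg hpd hq) _ _ zc, sum_condPr _ _ zc⟩

lemma sum_condEnt_le_objL (hpd : IsPMF pd) (hq : IsEncoder q)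
    {d : (i : ℕ) → (Fin i → V) → X → ℝ} (hd : IsDecoder K d) :
    ((1 / K * ∑ i : Fin K, condEnt (joint pd q) Prod.fst (fun ω => trunc (i + 1) i.isLt ω.2) :
      ℝ) : EReal) ≤ objL K pd q d := by
  rw [objL, EReal.coe_mul, EReal.coe_finset_sum]
  refine mul_le_mul_of_nonneg_left (sum_le_sum fun i _ => ?_)
    (EReal.coe_nonneg.mpr (by positivity))
  have hdi := hd (i + 1) (Nat.succ_pos _) i.isLt
  refine (coe_condEnt_le_sum_mul_negLog (joint_nonneg hpd hq) _ _ (r := d (i + 1))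
    (fun zc a => (hdi zc).1 a) (fun zc => (hdi zc).2)).trans_eq ?_
  rw [Fintype.sum_prod_type]
  rfl

lemma objL_posteriorDecoder (hpd : IsPMF pd) (hq : IsEncoder q) :
    objL K pd q (posteriorDecoder pd q) =
      ((1 / K * ∑ i : Fin K, condEnt (joint pd q) Prod.fst (fun ω => trunc (i + 1) i.isLt ω.2) :
        ℝ) : EReal) := by
  rw [objL, EReal.coe_mul, EReal.coe_finset_sum]
  congr 1
  refine sum_congr rfl fun i _ => ?_
  rw [← sum_mul_negLog_condPr (joint_nonneg hpd hq), Fintype.sum_prod_type]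
  simp only [posteriorDecoder, dif_pos (show (i : ℕ) + 1 ≤ K from i.isLt)]
  rfl

lemma sum_mi_trunc_le_of_isOptimalPair (hK : 0 < K) (hpd : IsPMF pd) (hq : IsEncoder q)
    {d : (i : ℕ) → (Fin i → V) → X → ℝ} (hd : IsDecoder K d)
    (hopt : IsOptimalPair K pd q d)
    {q' : X → (Fin K → V) → ℝ} (hq' : IsEncoder q') :
    ∑ i : Fin K, mi (joint pd q') Prod.fst (fun ω => trunc (i + 1) i.isLt ω.2) ≤
      ∑ i : Fin K, mi (joint pd q) Prod.fst (fun ω => trunc (i + 1) i.isLt ω.2) := by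
  have hL := (sum_condEnt_le_objL hpd hq hd).trans <|
    (hopt q' hq' _ (isDecoder_posteriorDecoder hpd hq')).trans_eq (objL_posteriorDecoder hpd hq')
  rw [EReal.coe_le_coe_iff, mul_le_mul_iff_right₀ (by positivity)] at hL
  simp only [mi_eq_ent_sub_condEnt (joint_nonneg hpd hq),
    mi_eq_ent_sub_condEnt (joint_nonneg hpd hq'), ent_joint_fst hq, ent_joint_fst hq',
    sum_sub_distrib]
  linarith

end Autoencoder

section Prefix

variable {V : Type*} {K : ℕ}

lemma trunc_eq_trunc_iff {m : ℕ} (h : m ≤ K) {v w : Fin K → V} :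
    trunc m h v = trunc m h w ↔ ∀ k : Fin K, (k : ℕ) < m → v k = w k := by
  simp only [funext_iff, trunc]
  exact ⟨fun H k hk => H ⟨k, hk⟩, fun H j => H _ j.isLt⟩

lemma trunc_succ_eq_trunc_succ_iff {n : ℕ} (h : n + 1 ≤ K) {v w : Fin K → V} :
    trunc (n + 1) h v = trunc (n + 1) h w ↔
      v ⟨n, h⟩ = w ⟨n, h⟩ ∧
        trunc n (Nat.le_of_succ_le h) v = trunc n (Nat.le_of_succ_le h) w := by
  rw [trunc_eq_trunc_iff, trunc_eq_trunc_iff]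
  refine ⟨fun H => ⟨H ⟨n, h⟩ n.lt_succ_self, fun k hk => H k (by omega)⟩, ?_⟩
  rintro ⟨hn, H⟩ k hk
  rcases Nat.lt_succ_iff_lt_or_eq.mp hk with hk | hk
  · exact H k hk
  · obtain rfl : k = ⟨n, h⟩ := Fin.ext hk
    exact hn

lemma trunc_comp_perm_eq_iff {m : ℕ} (h : m ≤ K) {σ : Equiv.Perm (Fin K)}
    (hσ : ∀ k, (σ k : ℕ) < m ↔ (k : ℕ) < m) {v w : Fin K → V} :
    trunc m h (v ∘ σ) = trunc m h (w ∘ σ) ↔ trunc m h v = trunc m h w := by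
  simp only [trunc_eq_trunc_iff, Function.comp_apply]
  refine ⟨fun H k hk => ?_, fun H k hk => H (σ k) ((hσ k).2 hk)⟩
  simpa using H (σ.symm k) (by rwa [← hσ, Equiv.apply_symm_apply])

lemma swap_succ_lt_iff {n m : ℕ} (h : n + 2 ≤ K) (hm : m ≠ n + 1) (k : Fin K) :
    (Equiv.swap (⟨n, by omega⟩ : Fin K) ⟨n + 1, h⟩ k : ℕ) < m ↔ (k : ℕ) < m := by
  rcases eq_or_ne k ⟨n, by omega⟩ with rfl | h₁
  · rw [Equiv.swap_apply_left]
    simp only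
    omega
  rcases eq_or_ne k ⟨n + 1, h⟩ with rfl | h₂
  · rw [Equiv.swap_apply_right]
    simp only
    omega
  rw [Equiv.swap_apply_of_ne_of_ne h₁ h₂]

lemma trunc_comp_swap_succ_eq_iff {n : ℕ} (h : n + 2 ≤ K) {v w : Fin K → V} :
    trunc (n + 1) (by omega) (v ∘ Equiv.swap ⟨n, by omega⟩ ⟨n + 1, h⟩) =
        trunc (n + 1) (by omega) (w ∘ Equiv.swap ⟨n, by omega⟩ ⟨n + 1, h⟩) ↔
      v ⟨n + 1, h⟩ = w ⟨n + 1, h⟩ ∧ trunc n (by omega) v = trunc n (by omega) w := by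
  rw [trunc_succ_eq_trunc_succ_iff, trunc_comp_perm_eq_iff _ (swap_succ_lt_iff h (by omega))]
  simp only [Function.comp_apply, Equiv.swap_apply_left]

end Prefix

section Increments

variable {X V : Type*} [Fintype X] [Fintype V] [DecidableEq X] {K : ℕ} {pd : X → ℝ}
  {q : X → (Fin K → V) → ℝ}

lemma mi_joint_comp_perm {B : Type*} [Fintype B] [DecidableEq B] (σ : Equiv.Perm (Fin K))
    (G : (Fin K → V) → B) :
    mi (joint pd fun a v => q a (v ∘ σ)) Prod.fst (fun ω => G ω.2) =
      mi (joint pd q) Prod.fst (fun ω => G (ω.2 ∘ σ.symm)) := by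
  let e : X × (Fin K → V) ≃ X × (Fin K → V) :=
    { toFun := fun ω => (ω.1, ω.2 ∘ σ)
      invFun := fun ω => (ω.1, ω.2 ∘ σ.symm)
      left_inv := fun ω => by simp [Function.comp_assoc]
      right_inv := fun ω => by simp [Function.comp_assoc] }
  have := mi_comp_equiv (μ := joint pd q) e Prod.fst fun ω => G (ω.2 ∘ σ.symm)
  simp only [e, Equiv.coe_fn_mk, Function.comp_assoc, Equiv.self_comp_symm,
    Function.comp_id] at this
  exact this

variable [DecidableEq V]

lemma mi_fst_trunc_succ {μ : X × (Fin K → V) → ℝ} (hμ : ∀ ω, 0 ≤ μ ω) {m : ℕ}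
    (h : m + 1 ≤ K) :
    mi μ Prod.fst (fun ω => trunc (m + 1) h ω.2) =
      mi μ Prod.fst (fun ω => trunc m (Nat.le_of_succ_le h) ω.2) +
        cmi μ Prod.fst (fun ω => ω.2 ⟨m, h⟩) (fun ω => trunc m (Nat.le_of_succ_le h) ω.2) := by
  rw [← mi_pair_eq_mi_add_cmi hμ]
  exact mi_congr_right hμ _ fun ω ω' => by rw [trunc_succ_eq_trunc_succ_iff, Prod.mk.injEq]

lemma mi_swap_le_mi_trunc_succ (hpd : IsPMF pd) (hq : IsEncoder q)
    {d : (i : ℕ) → (Fin i → V) → X → ℝ} (hd : IsDecoder K d)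
    (hopt : IsOptimalPair K pd q d)
    {n : ℕ} (h : n + 2 ≤ K) :
    mi (joint pd q) Prod.fst (fun ω => (ω.2 ⟨n + 1, h⟩, trunc n (by omega) ω.2)) ≤
      mi (joint pd q) Prod.fst (fun ω => trunc (n + 1) (by omega) ω.2) := by
  set σ := Equiv.swap (⟨n, by omega⟩ : Fin K) ⟨n + 1, h⟩
  have hμ := joint_nonneg hpd hq
  have hq' : IsEncoder fun a v => q a (v ∘ σ) := fun a =>
    ⟨fun v => (hq a).1 _, by
      rw [← (hq a).2]
      exact (σ.symm.arrowCongr (Equiv.refl V)).sum_comp (q a)⟩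
  have hswap : ∀ m (hm : m ≤ K),
      mi (joint pd fun a v => q a (v ∘ σ)) Prod.fst (fun ω => trunc m hm ω.2) =
        mi (joint pd q) Prod.fst (fun ω => trunc m hm (ω.2 ∘ σ)) := fun m hm => by
    rw [mi_joint_comp_perm, Equiv.symm_swap]
  have hsum := sum_mi_trunc_le_of_isOptimalPair (by omega) hpd hq hd hopt hq'
  rw [← sub_nonneg, ← sum_sub_distrib, sum_eq_single ⟨n, by omega⟩] at hsum
  · have hn : mi (joint pd q) Prod.fst (fun ω => trunc (n + 1) (by omega) (ω.2 ∘ σ)) =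
        mi (joint pd q) Prod.fst (fun ω => (ω.2 ⟨n + 1, h⟩, trunc n (by omega) ω.2)) :=
      mi_congr_right hμ _ fun ω ω' => by rw [trunc_comp_swap_succ_eq_iff, Prod.mk.injEq]
    rw [hswap, hn] at hsum
    linarith
  · intro j _ hj
    rw [hswap, sub_eq_zero]
    refine mi_congr_right hμ _ fun ω ω' =>
      (trunc_comp_perm_eq_iff _ (swap_succ_lt_iff h fun hj' => hj (Fin.ext ?_))).symm
    simp only at hj' ⊢
    omega
  · simp

/-- Coordinates are `0`-indexed: `ω.2 ⟨n, _⟩` is the paper's `z_{n+1}`, so this is the claim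
for `i = n + 2`. -/
theorem mi_trunc_increment_le (hpd : IsPMF pd) (hq : IsEncoder q)
    {d : (i : ℕ) → (Fin i → V) → X → ℝ} (hd : IsDecoder K d)
    (hopt : IsOptimalPair K pd q d)
    {n : ℕ} (h : n + 2 ≤ K)
    (hci : CondIndepRV (joint pd q) (fun ω => ω.2 ⟨n, by omega⟩) (fun ω => ω.2 ⟨n + 1, h⟩)
      (fun ω => (ω.1, trunc n (by omega) ω.2))) :
    mi (joint pd q) Prod.fst (fun ω => trunc (n + 2) h ω.2) -
        mi (joint pd q) Prod.fst (fun ω => trunc (n + 1) (by omega) ω.2) ≤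
      mi (joint pd q) Prod.fst (fun ω => trunc (n + 1) (by omega) ω.2) -
        mi (joint pd q) Prod.fst (fun ω => trunc n (by omega) ω.2) := by
  have hμ := joint_nonneg hpd hq
  calc _ = cmi (joint pd q) Prod.fst (fun ω => ω.2 ⟨n + 1, h⟩)
        (fun ω => trunc (n + 1) (by omega) ω.2) := by
        rw [mi_fst_trunc_succ hμ h]; ring
    _ = cmi (joint pd q) Prod.fst (fun ω => ω.2 ⟨n + 1, h⟩)
        (fun ω => (ω.2 ⟨n, by omega⟩, trunc n (by omega) ω.2)) :=
      cmi_congr_right hμ _ _ fun ω ω' => by rw [trunc_succ_eq_trunc_succ_iff, Prod.mk.injEq]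
    _ ≤ cmi (joint pd q) Prod.fst (fun ω => ω.2 ⟨n + 1, h⟩) (fun ω => trunc n (by omega) ω.2) :=
      cmi_le_of_condIndepRV hμ hci
    _ = mi (joint pd q) Prod.fst (fun ω => (ω.2 ⟨n + 1, h⟩, trunc n (by omega) ω.2)) -
        mi (joint pd q) Prod.fst (fun ω => trunc n (by omega) ω.2) := by
      rw [mi_pair_eq_mi_add_cmi hμ]; ring
    _ ≤ _ := by linarith [mi_swap_le_mi_trunc_succ hpd hq hd hopt h]

end Increments

/-- If the encoder/decoder pair `(q, d)` minimizes the objective `L` over all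
encoder/decoder pairs and `z_{i-1} ⊥ z_i ∣ (x, z_{≤ i-2})` under the induced joint law for all
`i ∈ {3, …, K}`, then the sequence `a_i = I(x; z_{≤ i})` has non-increasing increments:
`a_i - a_{i-1} ≤ a_{i-1} - a_{i-2}` for every `i ∈ {3, …, K}`. -/
theorem optimal_ordered_autoencoder_concave_information
    {X V : Type*} [Fintype X] [Fintype V] [DecidableEq X] [DecidableEq V]
    (K : ℕ) (pd : X → ℝ) (hpd : IsPMF pd)
    (q : X → (Fin K → V) → ℝ) (hq : IsEncoder q)
    (d : (i : ℕ) → (Fin i → V) → X → ℝ) (hd : IsDecoder K d)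
    (hopt : ∀ (q' : X → (Fin K → V) → ℝ), IsEncoder q' →
      ∀ (d' : (i : ℕ) → (Fin i → V) → X → ℝ), IsDecoder K d' →
        objL K pd q d ≤ objL K pd q' d')
    (hci : ∀ (i : ℕ) (h3 : 3 ≤ i) (hiK : i ≤ K),
      CondIndepRV (joint pd q)
        (fun ω => ω.2 (⟨i - 2, by omega⟩ : Fin K))
        (fun ω => ω.2 (⟨i - 1, by omega⟩ : Fin K))
        (fun ω => (ω.1, trunc (i - 2) (by omega) ω.2))) :
    ∀ (i : ℕ) (h3 : 3 ≤ i) (hiK : i ≤ K),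
      mi (joint pd q) Prod.fst (fun ω => trunc i hiK ω.2) -
          mi (joint pd q) Prod.fst (fun ω => trunc (i - 1) (by omega) ω.2) ≤
        mi (joint pd q) Prod.fst (fun ω => trunc (i - 1) (by omega) ω.2) -
          mi (joint pd q) Prod.fst (fun ω => trunc (i - 2) (by omega) ω.2) := by
  intro i h3 hiK
  obtain ⟨n, rfl⟩ : ∃ n, i = n + 2 := ⟨i - 2, by omega⟩
  exact mi_trunc_increment_le hpd hq hd hopt hiK (hci (n + 2) h3 hiK)
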